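/- Let 𝒫 be a finite tile collection, sparse relative to a sufficiently large absolute constant, with an L¹-normalized wave packet collection {φ_P} and a rigid collection of interval triples {(ω_{P,lower}, ω_P, ω_{P,upper})}, and let T₁f(P) := ⟨f, φ_P⟩. Then ‖T₁f‖_{𝓛^∞(𝒫, S_{2,lac}, μ)} ≲ sup_{E ⊂ 𝒫 lacunary generating} |I_E|^{−1} ‖ ( Σ_{P∈E} |T₁f(P)|² 1_{I_P} )^{1/2} ‖_{L^{1,∞}(ℝ)}, with implicit constant independent of 𝒫 and f. -/

import Mathlib

open MeasureTheory Complex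
open scoped ENNReal Classical

noncomputable section

/-- A bounded half-open interval `[lo, hi)`. -/
structure Iv where
  lo : ℝ
  hi : ℝ
  hlt : lo < hi

namespace Iv

/-- The length `|I|`. -/
def len (I : Iv) : ℝ := I.hi - I.lo

/-- The midpoint `c(I)`. -/
def c (I : Iv) : ℝ := (I.lo + I.hi) / 2

/-- The underlying set of points. -/
def set (I : Iv) : Set ℝ := Set.Ico I.lo I.hi

/-- The `C`-fold dilate `CI` of `I` about its center. -/
def dil (C : ℝ) (I : Iv) : Set ℝ := Set.Ico (I.c - C * I.len / 2) (I.c + C * I.len / 2)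

/-- The translate `I + t`. -/
def trans (I : Iv) (t : ℝ) : Iv := ⟨I.lo + t, I.hi + t, by have := I.hlt; linarith⟩

/-- The left half of `I`. -/
def left (I : Iv) : Iv := ⟨I.lo, I.c, by have := I.hlt; simp only [Iv.c]; linarith⟩

end Iv

/-- Standard dyadic interval `[n 2^k, (n+1) 2^k)`. -/
def IsDyadic (I : Iv) : Prop :=
  ∃ n k : ℤ, I.lo = (n : ℝ) * 2 ^ k ∧ I.hi = ((n : ℝ) + 1) * 2 ^ k

/-- `a`-shifted dyadic interval `2^k([n, n+1) + (-1)^k a)`. -/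
def IsShiftedDyadicWith (a : ℝ) (I : Iv) : Prop :=
  ∃ n k : ℤ, I.lo = 2 ^ k * ((n : ℝ) + (-1 : ℝ) ^ k * a) ∧
    I.hi = 2 ^ k * ((n : ℝ) + 1 + (-1 : ℝ) ^ k * a)

/-- Shifted dyadic interval, with shift in `[0,1)`. -/
def IsShiftedDyadic (I : Iv) : Prop := ∃ a ∈ Set.Ico (0 : ℝ) 1, IsShiftedDyadicWith a I

/-- A tile `P = I_P × ω_P`: a rectangle of area `1` whose spatial interval is standard
dyadic and whose frequency interval is a (possibly shifted) dyadic interval. -/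
structure Tile where
  I : Iv
  ω : Iv
  dyI : IsDyadic I
  sdω : IsShiftedDyadic ω
  area : I.len * ω.len = 1

/-- The weight `χ̃_I(x) = (1 + |x - c(I)|/|I|)^{-2}`. -/
def chit (I : Iv) (x : ℝ) : ℝ := ((1 + |x - I.c| / I.len) ^ 2)⁻¹

/-- A finite tile collection is sparse relative to `C₀`. -/
def Sparse (C₀ : ℝ) (Pcol : Finset Tile) : Prop :=
  ∀ P ∈ Pcol, ∀ Q ∈ Pcol, Q.I.len / C₀ ≤ P.I.len → P.I.len ≤ Q.I.len →
    P.I.len = Q.I.len ∧ (P.ω = Q.ω ∨ P.ω.dil C₀ ∩ Q.ω.dil C₀ = ∅)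

/-- The Fourier transform with the paper's normalization
`f̂(ξ) = (2π)^{-1/2} ∫ f(x) e^{-i x ξ} dx`. -/
def ftx (f : ℝ → ℂ) (ξ : ℝ) : ℂ :=
  ((2 * Real.pi) ^ (-(1/2 : ℝ)) : ℝ) * ∫ x : ℝ, f x * Complex.exp (-(Complex.I * x * ξ))

/-- The inner product `⟨f, g⟩ = ∫ f ḡ`. -/
def inn (f g : ℝ → ℂ) : ℂ := ∫ x : ℝ, f x * (starRingEnd ℂ) (g x)

/-- `{φ_P}` is an `L¹`-normalized wave packet collection for `Pcol`, with constants `Cw n`: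
`supp φ̂_P ⊂ (5/4)ω_P` and
`|(d/dx)^n (e^{-i c(ω_P) x} φ_P(x))| ≤ Cw n |I_P|^{-n-1} (1+|x-c(I_P)|/|I_P|)^{-n}`. -/
def WavePacketFam (Pcol : Finset Tile) (φ : Tile → ℝ → ℂ) (Cw : ℕ → ℝ) : Prop :=
  (∀ P ∈ Pcol, Function.support (ftx (φ P)) ⊆ P.ω.dil (5/4)) ∧
  ∀ n : ℕ, ∀ P ∈ Pcol, ∀ x : ℝ,
    ‖iteratedDeriv n (fun y : ℝ => Complex.exp (-(Complex.I * P.ω.c * y)) * φ P y) x‖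
      ≤ Cw n * P.I.len ^ (-(n : ℝ) - 1) * (1 + |x - P.I.c| / P.I.len) ^ (-(n : ℝ))

/-- `ω_{P,lower}`: the half-line `(-∞, c(ω_P) - (m - 1/2)|ω_P|)`. -/
def ωlowF (m : ℤ) (P : Tile) : Set ℝ := Set.Iio (P.ω.c - ((m : ℝ) - 1/2) * P.ω.len)

/-- `ω_{P,upper}`: the translated interval `ω_P + n |ω_P|`. -/
def ωupF (n : ℤ) (P : Tile) : Iv := P.ω.trans ((n : ℝ) * P.ω.len)

/-- The rigidity constraint `L₁ < m, n ≲ L₁` on the integers `m, n`. -/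
def RigidParams (L₁ A : ℝ) (m n : ℤ) : Prop :=
  L₁ < (m : ℝ) ∧ (m : ℝ) ≤ A * L₁ ∧ L₁ < (n : ℝ) ∧ (n : ℝ) ≤ A * L₁

/-- `1000 ω_P` lies strictly between `ω_{P,lower}` and `ω_{P,upper}`, for all `P ∈ Pcol`. -/
def StrictlyBetween (m n : ℤ) (Pcol : Finset Tile) : Prop :=
  ∀ P ∈ Pcol, ∀ x ∈ ωlowF m P, ∀ y ∈ P.ω.dil 1000, ∀ z ∈ (ωupF n P).set, x < y ∧ y < z

/-- `ω̃_P`: the convex hull of `50 ω_P` and `50 ω_{P,upper}`. -/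
def ωtl (n : ℤ) (P : Tile) : Set ℝ := convexHull ℝ (P.ω.dil 50 ∪ (ωupF n P).dil 50)

/-- A generating set: a nonempty `E ⊆ Pcol` together with a dyadic interval `I_E` and a
frequency `ξ_E` such that `I_P ⊆ I_E` and
`(ξ_E - 1/(2|I_E|), ξ_E + 1/(2|I_E|)) ⊆ ω̃_P` for every `P ∈ E`. -/
structure GenSet (Pcol : Finset Tile) (n : ℤ) where
  E : Finset Tile
  sub : E ⊆ Pcol
  ne : E.Nonempty
  top : Iv
  dyTop : IsDyadic top
  ξ : ℝ
  hI : ∀ P ∈ E, P.I.set ⊆ top.set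
  hξ : ∀ P ∈ E, Set.Ioo (ξ - 1 / (2 * top.len)) (ξ + 1 / (2 * top.len)) ⊆ ωtl n P

/-- A generating set is lacunary if `ξ_E ∈ 50 ω_{P,upper}` for every `P ∈ E`. -/
def GenSet.Lacunary {Pcol : Finset Tile} {n : ℤ} (G : GenSet Pcol n) : Prop :=
  ∀ P ∈ G.E, G.ξ ∈ (ωupF n P).dil 50

/-- A generating set is overlapping if `ξ_E ∈ ω̃_P ∖ 50 ω_{P,upper}` for every `P ∈ E`. -/
def GenSet.Overlapping {Pcol : Finset Tile} {n : ℤ} (G : GenSet Pcol n) : Prop :=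
  ∀ P ∈ G.E, G.ξ ∈ ωtl n P \ (ωupF n P).dil 50

/-- The outer measure on `Pcol` generated by the premeasure `E ↦ |I_E|` on generating
sets. -/
def outerμ (Pcol : Finset Tile) (n : ℤ) (A : Finset Tile) : ℝ≥0∞ :=
  ⨅ (Scov : Finset (GenSet Pcol n)) (_ : ∀ P ∈ A, ∃ G ∈ Scov, P ∈ G.E),
    ∑ G ∈ Scov, ENNReal.ofReal G.top.len

/-- The size `S_t` restricted to generating subsets satisfying `pred`:
`S(f)(E) = sup_S (|I_S|^{-1} Σ_{P ∈ S} |f(P)|^t |I_P|)^{1/t}`. -/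
def sizeT (Pcol : Finset Tile) (n : ℤ) (t : ℝ) (pred : GenSet Pcol n → Prop)
    (f : Tile → ℂ) (G : GenSet Pcol n) : ℝ≥0∞ :=
  ⨆ (S : GenSet Pcol n) (_ : pred S) (_ : S.E ⊆ G.E),
    ENNReal.ofReal (((∑ P ∈ S.E, ‖f P‖ ^ t * P.I.len) / S.top.len) ^ (1 / t))

/-- Outer `𝓛^∞` norm with respect to a size `SZ`. -/
def oLinf (Pcol : Finset Tile) (n : ℤ) (SZ : (Tile → ℂ) → GenSet Pcol n → ℝ≥0∞)
    (f : Tile → ℂ) : ℝ≥0∞ :=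
  ⨆ G : GenSet Pcol n, SZ f G

/-- The super-level measure `μ(SZ(f) > λ)`. -/
def levμ (Pcol : Finset Tile) (n : ℤ) (SZ : (Tile → ℂ) → GenSet Pcol n → ℝ≥0∞)
    (f : Tile → ℂ) (lam : ℝ≥0∞) : ℝ≥0∞ :=
  ⨅ (F : Finset Tile)
    (_ : ∀ G : GenSet Pcol n, SZ (fun P => if P ∈ F then 0 else f P) G ≤ lam),
    outerμ Pcol n F

/-- Outer `𝓛^p` norm, `0 < p < ∞`. -/
def oLp (Pcol : Finset Tile) (n : ℤ) (SZ : (Tile → ℂ) → GenSet Pcol n → ℝ≥0∞)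
    (p : ℝ) (f : Tile → ℂ) : ℝ≥0∞ :=
  (ENNReal.ofReal p *
      ∫⁻ t in Set.Ioi (0 : ℝ),
        ENNReal.ofReal (t ^ (p - 1)) * levμ Pcol n SZ f (ENNReal.ofReal t)) ^ (1 / p)

/-- Outer weak `𝓛^{p,∞}` norm, `0 < p < ∞`. -/
def oLpWeak (Pcol : Finset Tile) (n : ℤ) (SZ : (Tile → ℂ) → GenSet Pcol n → ℝ≥0∞)
    (p : ℝ) (f : Tile → ℂ) : ℝ≥0∞ :=
  ⨆ (t : ℝ) (_ : 0 < t),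
    ENNReal.ofReal t * (levμ Pcol n SZ f (ENNReal.ofReal t)) ^ (1 / p)

/-- A family of generating sets is strongly disjoint. -/
def StronglyDisjoint (Pcol : Finset Tile) (n : ℤ) {ι : Type} (E : ι → GenSet Pcol n) : Prop :=
  ∀ i j : ι, i ≠ j → ∀ P₁ ∈ (E i).E, ∀ P₂ ∈ (E j).E,
    (P₁.ω.dil 10 ∩ P₂.ω.dil 10).Nonempty → P₁.I.len ≤ P₂.I.len →
      P₁.I.set ∩ (E j).top.set = ∅

/-- The maximal average `M_N(Pcol, g) = sup_{P ∈ Pcol} |I_P|^{-1} ∫ χ̃_{I_P}^N g`. -/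
def MN (N : ℝ) (Pcol : Finset Tile) (g : ℝ → ℝ) : ℝ≥0∞ :=
  ⨆ P ∈ Pcol, (ENNReal.ofReal P.I.len)⁻¹ * ∫⁻ x : ℝ, ENNReal.ofReal (chit P.I x ^ N * g x)

/-- The embedding map `T₁ f (P) = ⟨f, φ_P⟩`. -/
def T1 (φ : Tile → ℝ → ℂ) (f : ℝ → ℂ) (P : Tile) : ℂ := inn f (φ P)

/-- The modulated cut-off wave packet
`φ̃_{P,j}(x) = φ_P(x) 1_{N_{j-1}(x) ∈ ω_{P,lower}} 1_{N_j(x) ∈ ω_{P,upper}}`. -/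
def phit (φ : Tile → ℝ → ℂ) (Nf : ℕ → ℝ → ℝ) (m n : ℤ) (P : Tile) (j : ℕ) (x : ℝ) : ℂ :=
  φ P x * (if Nf (j - 1) x ∈ ωlowF m P then 1 else 0) *
    (if Nf j x ∈ (ωupF n P).set then 1 else 0)

/-- The embedding map
`T₂ f (P) = ⟨f, Σ_{1 ≤ j ≤ K} d_j φ̃_{P,j} 1_{|I_P| ≤ α_j(·)}⟩`. -/
def T2 (φ : Tile → ℝ → ℂ) (Nf : ℕ → ℝ → ℝ) (m n : ℤ) (K : ℝ → ℕ)
    (d : ℕ → ℝ → ℂ) (α : ℕ → ℝ → ℝ≥0∞) (f : ℝ → ℂ) (P : Tile) : ℂ :=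
  inn f (fun x => ∑ j ∈ Finset.Icc 1 (K x),
    d j x * phit φ Nf m n P j x * (if ENNReal.ofReal P.I.len ≤ α j x then 1 else 0))

/-- The completion `Pcol̄` of a tile collection. -/
def completion (Pcol : Finset Tile) (n : ℤ) : Set Tile :=
  {R : Tile | ∃ P₁ ∈ Pcol, ∃ P₂ ∈ Pcol, P₁.I.set ⊆ R.I.set ∧ R.I.set ⊆ P₂.I.dil 30 ∧
    (ωtl n R ∩ ωtl n P₁).Nonempty ∧ (ωtl n R ∩ ωtl n P₂).Nonempty}

/-- `m_{s,N}(Pcol,(g_j)) = sup_{R ∈ Pcol̄} |I_R|^{-1} ∫ χ̃_{I_R}^N (Σ_{j : N_j ∈ ω̃_R} |g_j|^s)^{1/s}`. -/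
def msN (s N : ℝ) (Pcol : Finset Tile) (n : ℤ) (Nf : ℕ → ℝ → ℝ) (g : ℕ → ℝ → ℂ) : ℝ≥0∞ :=
  ⨆ R ∈ completion Pcol n, (ENNReal.ofReal R.I.len)⁻¹ *
    ∫⁻ x : ℝ, ENNReal.ofReal (chit R.I x ^ N) *
      (∑' j : ℕ, if Nf j x ∈ ωtl n R then (ENNReal.ofReal ‖g j x‖) ^ s else 0) ^ (1 / s)

/-- `m_{∞,N}(Pcol,(g_j)) = sup_{R ∈ Pcol̄} |I_R|^{-1} ∫ χ̃_{I_R}^N sup_{j : N_j ∈ ω̃_R} |g_j|`. -/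
def minfN (N : ℝ) (Pcol : Finset Tile) (n : ℤ) (Nf : ℕ → ℝ → ℝ) (g : ℕ → ℝ → ℂ) : ℝ≥0∞ :=
  ⨆ R ∈ completion Pcol n, (ENNReal.ofReal R.I.len)⁻¹ *
    ∫⁻ x : ℝ, ENNReal.ofReal (chit R.I x ^ N) *
      ⨆ j : ℕ, (if Nf j x ∈ ωtl n R then ENNReal.ofReal ‖g j x‖ else 0)

/-- The variation-norm Carleson expression `V_r(g)`. -/
def Vr (r : ℝ) (Pcol : Finset Tile) (φ : Tile → ℝ → ℂ) (Nf : ℕ → ℝ → ℝ) (m n : ℤ)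
    (K : ℝ → ℕ) (g : Tile → ℂ) (x : ℝ) : ℝ≥0∞ :=
  (∑ j ∈ Finset.Icc 1 (K x),
      (⨆ (α : ℝ) (_ : 0 < α),
        ENNReal.ofReal
          ‖∑ P ∈ Pcol.filter (fun P => P.I.len ≤ α),
              (P.I.len : ℂ) * g P * phit φ Nf m n P j x‖) ^ r) ^ (1 / r)

/-- The standing assumptions: sparseness, wave packets, rigidity. -/
def Setting (C₀ L₁ A : ℝ) (Cw : ℕ → ℝ) (Pcol : Finset Tile) (φ : Tile → ℝ → ℂ)
    (m n : ℤ) : Prop :=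
  Sparse C₀ Pcol ∧ WavePacketFam Pcol φ Cw ∧ RigidParams L₁ A m n ∧ StrictlyBetween m n Pcol

/-- Measurability and monotonicity of the linearizing data. -/
def MeasData (K : ℝ → ℕ) (Nf : ℕ → ℝ → ℝ) : Prop :=
  Measurable K ∧ (∀ j, Measurable (Nf j)) ∧ ∀ x, Monotone fun j => Nf j x

/-- The weak `L^{1,∞}` quasi-norm of a nonnegative function on `ℝ`. -/
def wL1 (g : ℝ → ℝ) : ℝ≥0∞ :=
  ⨆ (t : ℝ) (_ : 0 < t), ENNReal.ofReal t * volume {x : ℝ | t < g x}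

/-!
Only the coefficients `a_P = ⟨f, φ_P⟩` matter. Let `W` be the right-hand side and `S` a lacunary
generating set. Sparseness makes `P ↦ I_P` injective on `S`. Split `S` according to whether
`ξ_S` has room above it inside `ω̃_P`; any subfamily of one half contained in a dyadic interval
`J` is again a lacunary generating set with top `J` (after shifting `ξ_S` down in the second
half), so its square function has weak-`L¹` norm at most `W |J|`. A dyadic John–Nirenberg
argument upgrades this localized weak-type bound to `Σ_P |a_P|² |I_P| ≤ 25 W² |I_S|` for each
half.
-/

namespace Iv

lemma len_pos (I : Iv) : 0 < I.len := sub_pos.2 I.hlt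

lemma lo_mem (I : Iv) : I.lo ∈ I.set := ⟨le_rfl, I.hlt⟩

lemma measurableSet_set (I : Iv) : MeasurableSet I.set := measurableSet_Ico

lemma volume_set (I : Iv) : volume I.set = ENNReal.ofReal I.len := by
  simp [Iv.set, Real.volume_Ico, Iv.len]

lemma subset_iff {I J : Iv} : I.set ⊆ J.set ↔ J.lo ≤ I.lo ∧ I.hi ≤ J.hi :=
  Set.Ico_subset_Ico_iff I.hlt

lemma len_le_of_subset {I J : Iv} (h : I.set ⊆ J.set) : I.len ≤ J.len := by
  obtain ⟨h₁, h₂⟩ := subset_iff.1 h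
  simp only [Iv.len]; linarith

lemma eq_of_subset_of_len_le {I J : Iv} (h : I.set ⊆ J.set) (hlen : J.len ≤ I.len) : I = J := by
  obtain ⟨h₁, h₂⟩ := subset_iff.1 h
  obtain ⟨lo, hi, _⟩ := I
  obtain ⟨lo', hi', _⟩ := J
  simp only [Iv.len] at *
  obtain rfl : lo = lo' := by linarith
  obtain rfl : hi = hi' := by linarith
  rfl

lemma eq_of_set_eq {I J : Iv} (h : I.set = J.set) : I = J :=
  eq_of_subset_of_len_le h.le (len_le_of_subset h.ge)

end Iv

lemma int_le_of_mul_lt_add_one_mul {m n : ℤ} {s : ℝ} (hs : 0 < s) (h : m * s < (n + 1) * s) :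
    m ≤ n := by
  have : (m : ℝ) < n + 1 := lt_of_mul_lt_mul_right h hs.le
  exact Int.lt_add_one_iff.1 (by exact_mod_cast this)

lemma IsDyadic.subset_of_len_le {I J : Iv} (hI : IsDyadic I) (hJ : IsDyadic J)
    (hlen : I.len ≤ J.len) {x : ℝ} (hxI : x ∈ I.set) (hxJ : x ∈ J.set) : I.set ⊆ J.set := by
  obtain ⟨n, k, hlo, hhi⟩ := hI
  obtain ⟨m, l, glo, ghi⟩ := hJ
  simp only [Iv.len, Iv.set, Set.mem_Ico, hlo, hhi, glo, ghi] at hlen hxI hxJ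
  have hk : (0 : ℝ) < 2 ^ k := zpow_pos two_pos k
  obtain ⟨d, rfl⟩ : ∃ d : ℕ, l = k + d := by
    have hkl : (2 : ℝ) ^ k ≤ 2 ^ l := by nlinarith
    have := (zpow_le_zpow_iff_right₀ (one_lt_two : (1 : ℝ) < 2)).1 hkl
    exact ⟨(l - k).toNat, by omega⟩
  have h2l : (2 : ℝ) ^ (k + d : ℤ) = ((2 ^ d : ℤ) : ℝ) * 2 ^ k := by
    rw [zpow_add₀ two_ne_zero, zpow_natCast]; push_cast; ring
  rw [h2l] at hxJ
  have hmn : m * 2 ^ d ≤ n :=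
    int_le_of_mul_lt_add_one_mul hk (by push_cast at hxJ ⊢; nlinarith)
  have hnm : n + 1 ≤ (m + 1) * 2 ^ d :=
    Int.add_one_le_iff.2 (int_le_of_mul_lt_add_one_mul hk (by push_cast at hxJ ⊢; nlinarith))
  have hmn' : ((m * 2 ^ d : ℤ) : ℝ) ≤ n := by exact_mod_cast hmn
  have hnm' : (n : ℝ) + 1 ≤ (((m + 1) * 2 ^ d : ℤ) : ℝ) := by exact_mod_cast hnm
  push_cast at hmn' hnm'
  rw [Iv.subset_iff, hlo, hhi, glo, ghi, h2l]
  push_cast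
  constructor <;> nlinarith

lemma IsDyadic.subset_or_subset {I J : Iv} (hI : IsDyadic I) (hJ : IsDyadic J) {x : ℝ}
    (hxI : x ∈ I.set) (hxJ : x ∈ J.set) : I.set ⊆ J.set ∨ J.set ⊆ I.set :=
  (le_total I.len J.len).imp (hI.subset_of_len_le hJ · hxI hxJ) (hJ.subset_of_len_le hI · hxJ hxI)

def maximals (𝒞 : Finset Iv) : Finset Iv :=
  𝒞.filter fun J => ∀ K ∈ 𝒞, J.set ⊆ K.set → K = J

lemma maximals_subset (𝒞 : Finset Iv) : maximals 𝒞 ⊆ 𝒞 := Finset.filter_subset _ _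

lemma exists_mem_maximals_superset {𝒞 : Finset Iv} {J : Iv} (hJ : J ∈ 𝒞) :
    ∃ K ∈ maximals 𝒞, J.set ⊆ K.set := by
  obtain ⟨K, hK, hmax⟩ := (𝒞.filter fun K => J.set ⊆ K.set).exists_max_image Iv.len
    ⟨J, Finset.mem_filter.2 ⟨hJ, subset_rfl⟩⟩
  obtain ⟨hK𝒞, hJK⟩ := Finset.mem_filter.1 hK
  refine ⟨K, Finset.mem_filter.2 ⟨hK𝒞, fun K' hK' hKK' => ?_⟩, hJK⟩
  exact (Iv.eq_of_subset_of_len_le hKK'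
    (hmax K' (Finset.mem_filter.2 ⟨hK', hJK.trans hKK'⟩))).symm

lemma maximals_pairwiseDisjoint {𝒞 : Finset Iv} (h𝒞 : ∀ J ∈ 𝒞, IsDyadic J) :
    (maximals 𝒞 : Set Iv).PairwiseDisjoint Iv.set := by
  intro J hJ K hK hne
  refine Set.disjoint_left.2 fun x hxJ hxK => ?_
  obtain ⟨hJ𝒞, hJmax⟩ := Finset.mem_filter.1 hJ
  obtain ⟨hK𝒞, hKmax⟩ := Finset.mem_filter.1 hK
  rcases (h𝒞 J hJ𝒞).subset_or_subset (h𝒞 K hK𝒞) hxJ hxK with h | h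
  · exact hne (hJmax K hK𝒞 h).symm
  · exact hne (hKmax J hJ𝒞 h)

lemma le_wL1 (g : ℝ → ℝ) {t : ℝ} (ht : 0 < t) :
    ENNReal.ofReal t * volume {x | t < g x} ≤ wL1 g :=
  le_iSup₂ (f := fun (t : ℝ) (_ : 0 < t) => ENNReal.ofReal t * volume {x | t < g x}) t ht

lemma ofReal_mul_sum_len_le_wL1 {g : ℝ → ℝ} {t : ℝ} (ht : 0 < t) {𝒥 : Finset Iv}
    (hdisj : (𝒥 : Set Iv).PairwiseDisjoint Iv.set) (hg : ∀ J ∈ 𝒥, ∀ x ∈ J.set, t < g x) :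
    ENNReal.ofReal (t * ∑ J ∈ 𝒥, J.len) ≤ wL1 g := by
  have hvol : volume (⋃ J ∈ 𝒥, J.set) = ENNReal.ofReal (∑ J ∈ 𝒥, J.len) := by
    rw [measure_biUnion_finset hdisj fun J _ => J.measurableSet_set,
      ENNReal.ofReal_sum_of_nonneg fun J _ => J.len_pos.le]
    exact Finset.sum_congr rfl fun J _ => J.volume_set
  have hsub : (⋃ J ∈ 𝒥, J.set) ⊆ {x | t < g x} := by
    simp only [Set.iUnion_subset_iff]
    exact fun J hJ x hx => hg J hJ x hx
  calc ENNReal.ofReal (t * ∑ J ∈ 𝒥, J.len)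
      = ENNReal.ofReal t * volume (⋃ J ∈ 𝒥, J.set) := by rw [hvol, ENNReal.ofReal_mul ht.le]
    _ ≤ ENNReal.ofReal t * volume {x | t < g x} := by gcongr
    _ ≤ wL1 g := le_wL1 g ht

section SquareFunction

variable {ι : Type*} (I : ι → Iv) (a : ι → ℝ)

def sqFun (F : Finset ι) (x : ℝ) : ℝ :=
  Real.sqrt (∑ Q ∈ F, a Q ^ 2 * Set.indicator (I Q).set (fun _ => (1 : ℝ)) x)

def WeakLocalized (W : ℝ) (T : Finset ι) : Prop :=
  ∀ J : Iv, IsDyadic J → ∀ F ⊆ T, (∀ Q ∈ F, (I Q).set ⊆ J.set) →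
    wL1 (sqFun I a F) ≤ ENNReal.ofReal (W * J.len)

def tailMass (T : Finset ι) (J : Iv) : ℝ :=
  ∑ Q ∈ T with J.set ⊂ (I Q).set, a Q ^ 2

lemma wL1_sqFun_empty : wL1 (sqFun I a ∅) = 0 := by
  refine le_antisymm (iSup₂_le fun t ht => ?_) bot_le
  simp [sqFun, not_lt.2 ht.le]

lemma sum_sq_mul_indicator_eq (F : Finset ι) (x : ℝ) :
    ∑ Q ∈ F, a Q ^ 2 * Set.indicator (I Q).set (fun _ => (1 : ℝ)) x
      = ∑ Q ∈ F with x ∈ (I Q).set, a Q ^ 2 := by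
  rw [Finset.sum_filter]
  refine Finset.sum_congr rfl fun Q _ => ?_
  by_cases hx : x ∈ (I Q).set <;> simp [hx]

lemma sum_mul_len_le_of_sum_mul_indicator_le (F : Finset ι) (c : ι → ℝ)
    (hc : ∀ Q ∈ F, 0 ≤ c Q) (I₀ : Iv) (hsub : ∀ Q ∈ F, (I Q).set ⊆ I₀.set) {M : ℝ}
    (hM : ∀ x, ∑ Q ∈ F, c Q * Set.indicator (I Q).set (fun _ => (1 : ℝ)) x ≤ M) :
    ∑ Q ∈ F, c Q * (I Q).len ≤ M * I₀.len := by
  have hM₀ : 0 ≤ M := le_trans (Finset.sum_nonneg fun Q hQ =>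
    mul_nonneg (hc Q hQ) (Set.indicator_nonneg (fun _ _ => zero_le_one) _)) (hM I₀.lo)
  have hind : ∀ Q ∈ F, ∀ x, Set.indicator (I Q).set (fun _ => ENNReal.ofReal (c Q)) x
      = ENNReal.ofReal (c Q * Set.indicator (I Q).set (fun _ => (1 : ℝ)) x) := by
    intro Q _ x
    by_cases hx : x ∈ (I Q).set <;> simp [hx]
  refine (ENNReal.ofReal_le_ofReal_iff (mul_nonneg hM₀ I₀.len_pos.le)).1 ?_
  calc ENNReal.ofReal (∑ Q ∈ F, c Q * (I Q).len)
      = ∑ Q ∈ F, ∫⁻ x in I₀.set, Set.indicator (I Q).set (fun _ => ENNReal.ofReal (c Q)) x := by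
        rw [ENNReal.ofReal_sum_of_nonneg fun Q hQ => mul_nonneg (hc Q hQ) (I Q).len_pos.le]
        refine Finset.sum_congr rfl fun Q hQ => ?_
        rw [setLIntegral_indicator (I Q).measurableSet_set, Set.inter_eq_left.2 (hsub Q hQ),
          setLIntegral_const, (I Q).volume_set, ENNReal.ofReal_mul (hc Q hQ)]
    _ = ∫⁻ x in I₀.set, ENNReal.ofReal
          (∑ Q ∈ F, c Q * Set.indicator (I Q).set (fun _ => (1 : ℝ)) x) := by
        rw [← lintegral_finsetSum _ fun Q _ => measurable_const.indicator (I Q).measurableSet_set]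
        refine lintegral_congr fun x => ?_
        rw [ENNReal.ofReal_sum_of_nonneg fun Q hQ =>
          mul_nonneg (hc Q hQ) (Set.indicator_nonneg (fun _ _ => zero_le_one) _)]
        exact Finset.sum_congr rfl fun Q hQ => hind Q hQ x
    _ ≤ ∫⁻ _ in I₀.set, ENNReal.ofReal M := lintegral_mono fun x => ENNReal.ofReal_le_ofReal (hM x)
    _ = ENNReal.ofReal (M * I₀.len) := by
        rw [setLIntegral_const, I₀.volume_set, ENNReal.ofReal_mul hM₀]

lemma abs_le_of_wL1_sqFun_singleton_le {W : ℝ} (hW : 0 ≤ W) (Q : ι)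
    (h : wL1 (sqFun I a {Q}) ≤ ENNReal.ofReal (W * (I Q).len)) : |a Q| ≤ W := by
  by_contra! hlt
  obtain ⟨t, hWt, ht⟩ := exists_between hlt
  have ht₀ : 0 < t := hW.trans_lt hWt
  have hsingle : ((({I Q} : Finset Iv)) : Set Iv).PairwiseDisjoint Iv.set := by
    rw [Finset.coe_singleton]; exact Set.pairwiseDisjoint_singleton _ _
  have hlarge : ∀ J ∈ ({I Q} : Finset Iv), ∀ x ∈ J.set, t < sqFun I a {Q} x := by
    intro J hJ x hx
    rw [Finset.mem_singleton.1 hJ] at hx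
    simpa [sqFun, Set.indicator_of_mem hx, Real.sqrt_sq_eq_abs] using ht
  have hbound := (ofReal_mul_sum_len_le_wL1 ht₀ hsingle hlarge).trans h
  rw [Finset.sum_singleton, ENNReal.ofReal_le_ofReal_iff (mul_nonneg hW (I Q).len_pos.le)] at hbound
  nlinarith [(I Q).len_pos]

lemma tailMass_le_sum_sq_mul_indicator (T : Finset ι) {J : Iv} {x : ℝ} (hx : x ∈ J.set) :
    tailMass I a T J ≤ ∑ Q ∈ T, a Q ^ 2 * Set.indicator (I Q).set (fun _ => (1 : ℝ)) x := by
  rw [sum_sq_mul_indicator_eq]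
  refine Finset.sum_le_sum_of_subset_of_nonneg (fun Q hQ => ?_) fun _ _ _ => sq_nonneg _
  obtain ⟨hQT, hJQ⟩ := Finset.mem_filter.1 hQ
  exact Finset.mem_filter.2 ⟨hQT, hJQ.subset hx⟩

/-- The intervals of `T'` through `x` form a chain, and all but the shortest one strictly
contain it. -/
lemma sum_sq_mul_indicator_le (T : Finset ι) (hdy : ∀ Q ∈ T, IsDyadic (I Q))
    (hinj : Set.InjOn I T) {T' : Finset ι} (hT' : T' ⊆ T) {M : ℝ} (hM₀ : 0 ≤ M)
    (hM : ∀ Q ∈ T', a Q ^ 2 + tailMass I a T (I Q) ≤ M) (x : ℝ) :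
    ∑ Q ∈ T', a Q ^ 2 * Set.indicator (I Q).set (fun _ => (1 : ℝ)) x ≤ M := by
  rw [sum_sq_mul_indicator_eq]
  set Tx := T'.filter fun Q => x ∈ (I Q).set
  rcases Tx.eq_empty_or_nonempty with hTx | hTx
  · rw [hTx, Finset.sum_empty]; exact hM₀
  obtain ⟨Qm, hQm, hmin⟩ := Tx.exists_min_image (fun Q => (I Q).len) hTx
  obtain ⟨hQmT', hxQm⟩ := Finset.mem_filter.1 hQm
  have htail : Tx.erase Qm ⊆ T.filter fun Q => (I Qm).set ⊂ (I Q).set := by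
    intro Q hQ
    obtain ⟨hne, hQTx⟩ := Finset.mem_erase.1 hQ
    obtain ⟨hQT', hxQ⟩ := Finset.mem_filter.1 hQTx
    have hsub := (hdy Qm (hT' hQmT')).subset_of_len_le (hdy Q (hT' hQT')) (hmin Q hQTx) hxQm hxQ
    refine Finset.mem_filter.2 ⟨hT' hQT', hsub.ssubset_of_ne fun heq => hne ?_⟩
    exact hinj (hT' hQT') (hT' hQmT') (Iv.eq_of_set_eq heq).symm
  calc ∑ Q ∈ Tx, a Q ^ 2 = a Qm ^ 2 + ∑ Q ∈ Tx.erase Qm, a Q ^ 2 :=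
        (Finset.add_sum_erase _ _ hQm).symm
    _ ≤ a Qm ^ 2 + tailMass I a T (I Qm) :=
        add_le_add le_rfl (Finset.sum_le_sum_of_subset_of_nonneg htail
          fun _ _ _ => sq_nonneg _)
    _ ≤ M := hM Qm hQmT'

def stoppingIntervals (T : Finset ι) (t : ℝ) : Finset Iv :=
  maximals ((T.image I).filter fun J => t ^ 2 < tailMass I a T J)

variable {I a}

lemma isDyadic_of_mem_stoppingIntervals {T : Finset ι} (hdy : ∀ Q ∈ T, IsDyadic (I Q)) {t : ℝ}
    {J : Iv} (hJ : J ∈ stoppingIntervals I a T t) : IsDyadic J := by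
  obtain ⟨Q, hQ, rfl⟩ := Finset.mem_image.1 (Finset.mem_filter.1 (maximals_subset _ hJ)).1
  exact hdy Q hQ

lemma lt_tailMass_of_mem_stoppingIntervals {T : Finset ι} {t : ℝ} {J : Iv}
    (hJ : J ∈ stoppingIntervals I a T t) : t ^ 2 < tailMass I a T J :=
  (Finset.mem_filter.1 (maximals_subset _ hJ)).2

lemma stoppingIntervals_pairwiseDisjoint {T : Finset ι} (hdy : ∀ Q ∈ T, IsDyadic (I Q)) (t : ℝ) :
    (stoppingIntervals I a T t : Set Iv).PairwiseDisjoint Iv.set := by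
  refine maximals_pairwiseDisjoint fun J hJ => ?_
  obtain ⟨Q, hQ, rfl⟩ := Finset.mem_image.1 (Finset.mem_filter.1 hJ).1
  exact hdy Q hQ

lemma exists_mem_stoppingIntervals_superset {T : Finset ι} {t : ℝ} {Q : ι} (hQ : Q ∈ T)
    (hQt : t ^ 2 < tailMass I a T (I Q)) :
    ∃ J ∈ stoppingIntervals I a T t, (I Q).set ⊆ J.set :=
  exists_mem_maximals_superset (Finset.mem_filter.2 ⟨Finset.mem_image_of_mem I hQ, hQt⟩)

/-- A stopping interval has positive tail mass, so it lies strictly inside some `I_Q`. -/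
lemma filter_subset_ssubset_of_mem_stoppingIntervals {T : Finset ι} {t : ℝ} {J : Iv}
    (hJ : J ∈ stoppingIntervals I a T t) : T.filter (fun Q => (I Q).set ⊆ J.set) ⊂ T := by
  have hpos : tailMass I a T J ≠ 0 :=
    ((sq_nonneg t).trans_lt (lt_tailMass_of_mem_stoppingIntervals hJ)).ne'
  obtain ⟨Q, hQ, -⟩ := Finset.exists_ne_zero_of_sum_ne_zero hpos
  obtain ⟨hQT, hJQ⟩ := Finset.mem_filter.1 hQ
  exact Finset.filter_ssubset.2 ⟨Q, hQT, hJQ.not_subset⟩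

lemma sum_filter_stopped_eq {T : Finset ι} (hdy : ∀ Q ∈ T, IsDyadic (I Q)) (t : ℝ)
    (f : ι → ℝ) :
    ∑ Q ∈ T with ∃ J ∈ stoppingIntervals I a T t, (I Q).set ⊆ J.set, f Q
      = ∑ J ∈ stoppingIntervals I a T t, ∑ Q ∈ T with (I Q).set ⊆ J.set, f Q := by
  rw [← Finset.sum_biUnion]
  · congr 1
    ext Q
    simp only [Finset.mem_filter, Finset.mem_biUnion]
    tauto
  · intro J hJ K hK hne
    refine Finset.disjoint_left.2 fun Q hQJ hQK => ?_
    exact Set.disjoint_left.1 (stoppingIntervals_pairwiseDisjoint hdy t hJ hK hne)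
      ((Finset.mem_filter.1 hQJ).2 (I Q).lo_mem) ((Finset.mem_filter.1 hQK).2 (I Q).lo_mem)

lemma sum_sq_mul_len_not_stopped_le {T : Finset ι} (hdy : ∀ Q ∈ T, IsDyadic (I Q))
    (hinj : Set.InjOn I T) {W : ℝ} (haW : ∀ Q ∈ T, |a Q| ≤ W) {I₀ : Iv}
    (hsub : ∀ Q ∈ T, (I Q).set ⊆ I₀.set) (t : ℝ) :
    ∑ Q ∈ T with ¬ ∃ J ∈ stoppingIntervals I a T t, (I Q).set ⊆ J.set, a Q ^ 2 * (I Q).len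
      ≤ (W ^ 2 + t ^ 2) * I₀.len := by
  refine sum_mul_len_le_of_sum_mul_indicator_le I _ (fun Q => a Q ^ 2)
    (fun _ _ => sq_nonneg _) I₀ (fun Q hQ => hsub Q (Finset.mem_filter.1 hQ).1) fun x => ?_
  refine sum_sq_mul_indicator_le I a T hdy hinj (Finset.filter_subset _ _) (by positivity)
    (fun Q hQ => ?_) x
  obtain ⟨hQT, hQout⟩ := Finset.mem_filter.1 hQ
  have haQ : a Q ^ 2 ≤ W ^ 2 := by
    rw [← sq_abs]; exact pow_le_pow_left₀ (abs_nonneg _) (haW Q hQT) 2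
  have htail : tailMass I a T (I Q) ≤ t ^ 2 :=
    not_lt.1 fun h => hQout (exists_mem_stoppingIntervals_superset hQT h)
  linarith

lemma mul_sum_len_stoppingIntervals_le {T : Finset ι} (hdy : ∀ Q ∈ T, IsDyadic (I Q))
    {W t : ℝ} (hW : 0 ≤ W) (ht : 0 < t) (hloc : WeakLocalized I a W T) {I₀ : Iv}
    (hI₀ : IsDyadic I₀) (hsub : ∀ Q ∈ T, (I Q).set ⊆ I₀.set) :
    t * ∑ J ∈ stoppingIntervals I a T t, J.len ≤ W * I₀.len := by
  refine (ENNReal.ofReal_le_ofReal_iff (mul_nonneg hW I₀.len_pos.le)).1 <|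
    (ofReal_mul_sum_len_le_wL1 ht (stoppingIntervals_pairwiseDisjoint hdy t)
      fun J hJ x hx => ?_).trans (hloc I₀ hI₀ T subset_rfl hsub)
  exact (Real.lt_sqrt ht.le).2 ((lt_tailMass_of_mem_stoppingIntervals hJ).trans_le
    (tailMass_le_sum_sq_mul_indicator I a T hx))

/-- Dyadic John–Nirenberg: at height `4W`, the square function is at most `√17 W` off the
stopping intervals, which have total length at most `|I₀| / 4` by the weak-type bound; inside
them one recurses. -/
theorem sum_sq_mul_len_le_of_weakLocalized {W : ℝ} (hW : 0 ≤ W) (T : Finset ι)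
    (hdy : ∀ Q ∈ T, IsDyadic (I Q)) (hinj : Set.InjOn I T) (hloc : WeakLocalized I a W T)
    (I₀ : Iv) (hI₀ : IsDyadic I₀) (hsub : ∀ Q ∈ T, (I Q).set ⊆ I₀.set) :
    ∑ Q ∈ T, a Q ^ 2 * (I Q).len ≤ 25 * W ^ 2 * I₀.len := by
  induction T using Finset.strongInduction generalizing I₀ with
  | H T ih =>
  set 𝒥 := stoppingIntervals I a T (4 * W)
  have haW : ∀ Q ∈ T, |a Q| ≤ W := fun Q hQ => abs_le_of_wL1_sqFun_singleton_le I a hW Q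
    (hloc (I Q) (hdy Q hQ) {Q} (Finset.singleton_subset_iff.2 hQ) (by simp))
  have h_out : ∑ Q ∈ T with ¬ ∃ J ∈ 𝒥, (I Q).set ⊆ J.set, a Q ^ 2 * (I Q).len
      ≤ (W ^ 2 + (4 * W) ^ 2) * I₀.len :=
    sum_sq_mul_len_not_stopped_le hdy hinj haW hsub (4 * W)
  have h_len : 4 * W * ∑ J ∈ 𝒥, J.len ≤ W * I₀.len := by
    rcases hW.eq_or_lt with rfl | hW'
    · simp
    exact mul_sum_len_stoppingIntervals_le hdy hW (by positivity) hloc hI₀ hsub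
  have h_in : ∑ Q ∈ T with ∃ J ∈ 𝒥, (I Q).set ⊆ J.set, a Q ^ 2 * (I Q).len
      ≤ 25 * W ^ 2 * ∑ J ∈ 𝒥, J.len := by
    rw [sum_filter_stopped_eq hdy, Finset.mul_sum]
    refine Finset.sum_le_sum fun J hJ => ?_
    have hss := filter_subset_ssubset_of_mem_stoppingIntervals hJ
    exact ih _ hss (fun Q hQ => hdy Q (hss.subset hQ)) (hinj.mono (Finset.coe_subset.2 hss.subset))
      (fun J' hJ' F hF => hloc J' hJ' F (hF.trans hss.subset)) J
      (isDyadic_of_mem_stoppingIntervals hdy hJ) fun Q hQ => (Finset.mem_filter.1 hQ).2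
  rw [← Finset.sum_filter_add_sum_filter_not T fun Q => ∃ J ∈ 𝒥, (I Q).set ⊆ J.set]
  nlinarith [mul_le_mul_of_nonneg_left h_len (by positivity : (0 : ℝ) ≤ 25 / 4 * W),
    mul_nonneg (sq_nonneg W) I₀.len_pos.le]

end SquareFunction

lemma Tile.ext {P Q : Tile} (hI : P.I = Q.I) (hω : P.ω = Q.ω) : P = Q := by
  cases P; cases Q
  cases hI; cases hω
  rfl

lemma Tile.ω_len_eq_inv (P : Tile) : P.ω.len = 1 / P.I.len := by
  rw [eq_div_iff P.I.len_pos.ne', mul_comm]; exact P.area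

lemma mem_dil_ωupF_iff {n : ℤ} {P : Tile} {ξ : ℝ} :
    ξ ∈ (ωupF n P).dil 50 ↔
      P.ω.c + (n - 25) * P.ω.len ≤ ξ ∧ ξ < P.ω.c + (n + 25) * P.ω.len := by
  simp only [ωupF, Iv.dil, Iv.trans, Iv.c, Iv.len, Set.mem_Ico]
  constructor <;> rintro ⟨h₁, h₂⟩ <;> constructor <;> linarith

lemma convexHull_Ico_union_Ico {a b c d : ℝ} (hab : a < b) (hcd : c < d) (hac : a ≤ c)
    (hbd : b ≤ d) : convexHull ℝ (Set.Ico a b ∪ Set.Ico c d) = Set.Ico a d := by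
  refine subset_antisymm (convexHull_min (Set.union_subset (Set.Ico_subset_Ico le_rfl hbd)
    (Set.Ico_subset_Ico hac le_rfl)) (convex_Ico a d)) fun x ⟨hax, hxd⟩ => ?_
  have ha : a ∈ convexHull ℝ (Set.Ico a b ∪ Set.Ico c d) :=
    subset_convexHull ℝ _ (Or.inl ⟨le_rfl, hab⟩)
  have hy : max x c ∈ convexHull ℝ (Set.Ico a b ∪ Set.Ico c d) :=
    subset_convexHull ℝ _ (Or.inr ⟨le_max_right _ _, max_lt hxd hcd⟩)
  exact (convex_convexHull ℝ _).ordConnected.out ha hy ⟨hax, le_max_left _ _⟩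

lemma ωtl_eq_Ico {n : ℤ} (hn : 0 ≤ n) (P : Tile) :
    ωtl n P = Set.Ico (P.ω.c - 25 * P.ω.len) (P.ω.c + (n + 25) * P.ω.len) := by
  have hw := P.ω.len_pos
  have hn' : (0 : ℝ) ≤ n := by exact_mod_cast hn
  have hc : (ωupF n P).c = P.ω.c + n * P.ω.len := by simp only [ωupF, Iv.trans, Iv.c]; ring
  have hl : (ωupF n P).len = P.ω.len := by simp only [ωupF, Iv.trans, Iv.len]; ring
  rw [ωtl, Iv.dil, Iv.dil, hc, hl, convexHull_Ico_union_Ico (by linarith) (by linarith)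
    (by nlinarith) (by nlinarith)]
  congr 1 <;> ring

/-- In a lacunary generating set the frequency intervals of tiles with the same spatial
interval are `50`-close, so sparseness forces them to coincide. -/
lemma GenSet.Lacunary.injOn_I {C₀ : ℝ} (hC₀ : 50 < C₀) {Pcol : Finset Tile}
    (hsp : Sparse C₀ Pcol) {n : ℤ} {S : GenSet Pcol n} (hS : S.Lacunary) :
    Set.InjOn Tile.I S.E := by
  intro P hP Q hQ hPQ
  have hlen : P.I.len = Q.I.len := by rw [hPQ]
  obtain ⟨-, hω | hdisj⟩ := hsp P (S.sub hP) Q (S.sub hQ)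
    (by rw [← hlen]; exact div_le_self P.I.len_pos.le (by linarith)) hlen.le
  · exact Tile.ext hPQ hω
  have hw : Q.ω.len = P.ω.len := by rw [Q.ω_len_eq_inv, P.ω_len_eq_inv, hlen]
  have hwpos := P.ω.len_pos
  obtain ⟨hP₁, hP₂⟩ := mem_dil_ωupF_iff.1 (hS P hP)
  obtain ⟨hQ₁, hQ₂⟩ := mem_dil_ωupF_iff.1 (hS Q hQ)
  rw [hw] at hQ₁ hQ₂
  have hz : (P.ω.c + Q.ω.c) / 2 ∈ P.ω.dil C₀ ∩ Q.ω.dil C₀ := by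
    simp only [Iv.dil, Set.mem_inter_iff, Set.mem_Ico, hw]
    refine ⟨⟨?_, ?_⟩, ?_, ?_⟩ <;> nlinarith
  rw [hdisj] at hz
  exact absurd hz (Set.notMem_empty _)

lemma one_div_two_mul_len_le {Q : Tile} {J : Iv} (h : Q.I.set ⊆ J.set) :
    1 / (2 * J.len) ≤ Q.ω.len / 2 := by
  rw [Q.ω_len_eq_inv, div_div, mul_comm 2]
  exact one_div_le_one_div_of_le (by nlinarith [Q.I.len_pos]) (by nlinarith [Iv.len_le_of_subset h])

lemma Ioo_subset_ωtl {n : ℤ} (hn : 0 < n) {Q : Tile} {ξ r : ℝ} (hr : r ≤ Q.ω.len / 2)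
    (hξ : ξ ∈ (ωupF n Q).dil 50) (hξr : ξ + r ≤ Q.ω.c + (n + 25) * Q.ω.len) :
    Set.Ioo (ξ - r) (ξ + r) ⊆ ωtl n Q := by
  have hn' : (1 : ℝ) ≤ n := by exact_mod_cast hn
  obtain ⟨hξ₁, -⟩ := mem_dil_ωupF_iff.1 hξ
  rw [ωtl_eq_Ico hn.le]
  rintro y ⟨hy₁, hy₂⟩
  constructor <;> nlinarith [Q.ω.len_pos]

lemma exists_lacunary_genSet {Pcol : Finset Tile} {n : ℤ} (hn : 0 < n) {F : Finset Tile}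
    (hF : F ⊆ Pcol) (hne : F.Nonempty) {J : Iv} (hJ : IsDyadic J)
    (hFJ : ∀ Q ∈ F, Q.I.set ⊆ J.set) {ξ : ℝ}
    (hξ : ∀ Q ∈ F, ξ ∈ (ωupF n Q).dil 50 ∧ ξ + 1 / (2 * J.len) ≤ Q.ω.c + (n + 25) * Q.ω.len) :
    ∃ G : GenSet Pcol n, G.Lacunary ∧ G.E = F ∧ G.top = J :=
  ⟨⟨F, hF, hne, J, hJ, ξ, hFJ, fun Q hQ =>
    Ioo_subset_ωtl hn (one_div_two_mul_len_le (hFJ Q hQ)) (hξ Q hQ).1 (hξ Q hQ).2⟩,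
    fun Q hQ => (hξ Q hQ).1, rfl, rfl⟩

def RoomAbove (n : ℤ) (ξ : ℝ) (Q : Tile) : Prop :=
  ξ + Q.ω.len / 2 ≤ Q.ω.c + (n + 25) * Q.ω.len

/-- Keep `ξ_S` when there is room above it in every `ω̃_Q`; otherwise shift it down by the new
radius `1 / (2|J|)`. -/
lemma GenSet.Lacunary.exists_of_subset {Pcol : Finset Tile} {n : ℤ} (hn : 0 < n)
    {S : GenSet Pcol n} (hS : S.Lacunary) (room : Prop) {F : Finset Tile}
    (hF : ∀ Q ∈ F, Q ∈ S.E ∧ (RoomAbove n S.ξ Q ↔ room)) (hne : F.Nonempty) {J : Iv}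
    (hJ : IsDyadic J) (hFJ : ∀ Q ∈ F, Q.I.set ⊆ J.set) :
    ∃ G : GenSet Pcol n, G.Lacunary ∧ G.E = F ∧ G.top = J := by
  have hFS : F ⊆ Pcol := fun Q hQ => S.sub (hF Q hQ).1
  have hr : 0 < 1 / (2 * J.len) := by have := J.len_pos; positivity
  by_cases hroom : room
  · refine exists_lacunary_genSet hn hFS hne hJ hFJ fun Q hQ => ⟨hS Q (hF Q hQ).1, ?_⟩
    have := (hF Q hQ).2.2 hroom
    unfold RoomAbove at this
    linarith [one_div_two_mul_len_le (hFJ Q hQ)]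
  · refine exists_lacunary_genSet hn hFS hne hJ hFJ (ξ := S.ξ - 1 / (2 * J.len)) fun Q hQ => ?_
    have hnot : ¬ RoomAbove n S.ξ Q := fun h => hroom ((hF Q hQ).2.1 h)
    unfold RoomAbove at hnot
    obtain ⟨hξ₁, hξ₂⟩ := mem_dil_ωupF_iff.1 (hS Q (hF Q hQ).1)
    have := one_div_two_mul_len_le (hFJ Q hQ)
    refine ⟨mem_dil_ωupF_iff.2 ⟨?_, ?_⟩, ?_⟩ <;> nlinarith [Q.ω.len_pos]

def lacWeakNorm (Pcol : Finset Tile) (n : ℤ) (a : Tile → ℂ) : ℝ≥0∞ :=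
  ⨆ (G : GenSet Pcol n) (_ : G.Lacunary),
    (ENNReal.ofReal G.top.len)⁻¹ * wL1 (sqFun Tile.I (fun P => ‖a P‖) G.E)

lemma GenSet.Lacunary.wL1_sqFun_le {Pcol : Finset Tile} {n : ℤ} (a : Tile → ℂ)
    {G : GenSet Pcol n} (hG : G.Lacunary) :
    wL1 (sqFun Tile.I (fun P => ‖a P‖) G.E) ≤ ENNReal.ofReal G.top.len * lacWeakNorm Pcol n a := by
  have hG' := le_iSup₂ (f := fun (G : GenSet Pcol n) (_ : G.Lacunary) =>
    (ENNReal.ofReal G.top.len)⁻¹ * wL1 (sqFun Tile.I (fun P => ‖a P‖) G.E)) G hG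
  have hpos : ENNReal.ofReal G.top.len ≠ 0 := ENNReal.ofReal_pos.2 G.top.len_pos |>.ne'
  calc wL1 (sqFun Tile.I (fun P => ‖a P‖) G.E)
      = ENNReal.ofReal G.top.len *
          ((ENNReal.ofReal G.top.len)⁻¹ * wL1 (sqFun Tile.I (fun P => ‖a P‖) G.E)) := by
        rw [← mul_assoc, ENNReal.mul_inv_cancel hpos ENNReal.ofReal_ne_top, one_mul]
    _ ≤ ENNReal.ofReal G.top.len * lacWeakNorm Pcol n a := by gcongr; exact hG'

lemma weakLocalized_of_exists_lacunary {Pcol : Finset Tile} {n : ℤ} (a : Tile → ℂ)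
    (hfin : lacWeakNorm Pcol n a ≠ ⊤) {S₀ : Finset Tile}
    (hS₀ : ∀ J : Iv, IsDyadic J → ∀ F ⊆ S₀, F.Nonempty → (∀ Q ∈ F, Q.I.set ⊆ J.set) →
      ∃ G : GenSet Pcol n, G.Lacunary ∧ G.E = F ∧ G.top = J) :
    WeakLocalized Tile.I (fun P => ‖a P‖) (lacWeakNorm Pcol n a).toReal S₀ := by
  intro J hJ F hF hFJ
  rcases F.eq_empty_or_nonempty with rfl | hne
  · rw [wL1_sqFun_empty]; exact bot_le
  obtain ⟨G, hG, rfl, rfl⟩ := hS₀ J hJ F hF hne hFJ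
  rw [mul_comm, ENNReal.ofReal_mul G.top.len_pos.le, ENNReal.ofReal_toReal hfin]
  exact hG.wL1_sqFun_le a

lemma GenSet.Lacunary.sizeT_le {C₀ : ℝ} (hC₀ : 50 < C₀) {Pcol : Finset Tile}
    (hsp : Sparse C₀ Pcol) {n : ℤ} (hn : 0 < n) (a : Tile → ℂ) {S : GenSet Pcol n}
    (hS : S.Lacunary) :
    ENNReal.ofReal (((∑ P ∈ S.E, ‖a P‖ ^ (2 : ℝ) * P.I.len) / S.top.len) ^ (1 / (2 : ℝ)))
      ≤ ENNReal.ofReal 8 * lacWeakNorm Pcol n a := by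
  rcases eq_or_ne (lacWeakNorm Pcol n a) ⊤ with htop | hfin
  · rw [htop, ENNReal.mul_top (by norm_num)]; exact le_top
  set W := (lacWeakNorm Pcol n a).toReal
  have hW : 0 ≤ W := ENNReal.toReal_nonneg
  have half (room : Prop) : ∑ P ∈ S.E with (RoomAbove n S.ξ P ↔ room), ‖a P‖ ^ 2 * P.I.len
      ≤ 25 * W ^ 2 * S.top.len := by
    refine sum_sq_mul_len_le_of_weakLocalized hW _ (fun Q _ => Q.dyI)
      ((hS.injOn_I hC₀ hsp).mono (Finset.coe_subset.2 (Finset.filter_subset _ _)))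
      (weakLocalized_of_exists_lacunary a hfin fun J hJ F hF hne hFJ =>
        hS.exists_of_subset hn room (fun Q hQ => Finset.mem_filter.1 (hF hQ)) hne hJ hFJ)
      S.top S.dyTop fun Q hQ => S.hI Q (Finset.mem_filter.1 hQ).1
  have hsum : ∑ P ∈ S.E, ‖a P‖ ^ 2 * P.I.len ≤ (8 * W) ^ 2 * S.top.len := by
    have h₁ := half True
    have h₂ := half False
    simp only [iff_true, iff_false] at h₁ h₂
    rw [← Finset.sum_filter_add_sum_filter_not S.E (RoomAbove n S.ξ)]
    nlinarith [mul_nonneg (sq_nonneg W) S.top.len_pos.le]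
  simp only [Real.rpow_two, ← Real.sqrt_eq_rpow]
  rw [← ENNReal.ofReal_toReal hfin, ← ENNReal.ofReal_mul (by norm_num)]
  refine ENNReal.ofReal_le_ofReal (Real.sqrt_le_iff.2 ⟨by positivity, ?_⟩)
  rwa [div_le_iff₀ S.top.len_pos]

/-- Lemma 6.3 (characterization of the lacunary size): `‖T₁ f‖_{𝓛^∞(𝒫,S_{2,lac},μ)}` is
controlled by `sup_{E lacunary} |I_E|^{-1} ‖(Σ_{P∈E} |T₁f(P)|² 1_{I_P})^{1/2}‖_{L^{1,∞}}`. -/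
theorem statement7 :
    ∃ c₀ : ℝ, 1 ≤ c₀ ∧
    ∀ C₀ L₁ A : ℝ, c₀ ≤ C₀ → c₀ ≤ L₁ → 1 ≤ A →
    ∀ Cw : ℕ → ℝ,
    ∃ C : ℝ, 0 < C ∧
      ∀ (Pcol : Finset Tile) (φ : Tile → ℝ → ℂ) (m n : ℤ),
        Setting C₀ L₁ A Cw Pcol φ m n →
        ∀ f : ℝ → ℂ,
          oLinf Pcol n (sizeT Pcol n 2 GenSet.Lacunary) (T1 φ f)
            ≤ ENNReal.ofReal C *
              ⨆ (G : GenSet Pcol n) (_ : G.Lacunary),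
                (ENNReal.ofReal G.top.len)⁻¹ *
                  wL1 (fun x => Real.sqrt
                    (∑ P ∈ G.E, ‖T1 φ f P‖ ^ 2 *
                      Set.indicator P.I.set (fun _ => (1 : ℝ)) x)) := by
  refine ⟨51, by norm_num, fun C₀ L₁ A hC₀ hL₁ _ Cw => ⟨8, by norm_num, ?_⟩⟩
  rintro Pcol φ m n ⟨hsp, -, ⟨-, -, hn, -⟩, -⟩ f
  have hn : 0 < n := by exact_mod_cast (show (0 : ℝ) < n by linarith)
  exact iSup_le fun G => iSup₂_le fun S hS => iSup_le fun _ =>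
    hS.sizeT_le (by linarith) hsp hn (T1 φ f)

end
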